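/- arXiv:1511.02711 — 4 statements merged into one kernel-verified Lean document; each statement's English description precedes it below -/
import Mathlib

section
/- For each n, let Zₙ be a nonnegative random variable with E[Zₙ] bounded uniformly in n. Then Zₙ - E[Zₙ] → 0 in probability if and only if E[exp(-Zₙ)] - exp(-E[Zₙ]) → 0. -/
/-!
Write `m = E[Z]`. Since `x ↦ exp (-x)` is `1`-Lipschitz on `[0, ∞)` with values in `(0, 1]`,
`|E[exp (-Z)] - exp (-m)|` is at most `δ + P(|Z - m| > δ)`, which gives the forward implication.
Conversely, `E[exp (-Z)] - exp (-m)` is the expectation of the convexity gap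
`exp (-Z) - exp (-m) + exp (-m) (Z - m) = exp (-m) g(Z - m)`, where `g t = exp (-t) - 1 + t ≥ 0`.
On `{|Z - m| > ε}` this gap is at least `exp (-C) min (g ε) (g (-ε)) > 0` because `m ≤ C`,
so Markov's inequality bounds `P(|Z - m| > ε)` by a multiple of `E[exp (-Z)] - exp (-m)`.
-/

open MeasureTheory Filter Real

lemma abs_exp_neg_sub_exp_neg_le {a b : ℝ} (ha : 0 ≤ a) (hb : 0 ≤ b) :
    |exp (-a) - exp (-b)| ≤ |a - b| := by
  wlog hab : a ≤ b generalizing a b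
  · rw [abs_sub_comm, abs_sub_comm a b]
    exact this hb ha (le_of_not_ge hab)
  have h1 : exp (-a) * exp (a - b) = exp (-b) := by rw [← exp_add]; ring_nf
  have h2 := add_one_le_exp (a - b)
  have h3 : exp (-a) ≤ 1 := exp_le_one_iff.2 (by linarith)
  have h4 := exp_pos (-a)
  rw [abs_of_nonpos (by linarith : a - b ≤ 0),
    abs_of_nonneg (sub_nonneg.2 (exp_le_exp.2 (by linarith)))]
  nlinarith

noncomputable def expNegTangentGap (t : ℝ) : ℝ := exp (-t) - 1 + t

lemma expNegTangentGap_nonneg (t : ℝ) : 0 ≤ expNegTangentGap t := by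
  have := add_one_le_exp (-t)
  unfold expNegTangentGap
  linarith

lemma expNegTangentGap_pos {t : ℝ} (ht : t ≠ 0) : 0 < expNegTangentGap t := by
  have := add_one_lt_exp (neg_ne_zero.2 ht)
  unfold expNegTangentGap
  linarith

-- convexity: the graph of `expNegTangentGap` lies above its tangent line at `s`
lemma expNegTangentGap_add_mul_le (s t : ℝ) :
    expNegTangentGap s + (t - s) * (1 - exp (-s)) ≤ expNegTangentGap t := by
  have h1 : exp (-s) * exp (s - t) = exp (-t) := by rw [← exp_add]; ring_nf
  have h2 := add_one_le_exp (s - t)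
  have h3 := exp_pos (-s)
  unfold expNegTangentGap
  nlinarith

lemma min_expNegTangentGap_le {ε t : ℝ} (hε : 0 ≤ ε) (ht : ε ≤ |t|) :
    min (expNegTangentGap ε) (expNegTangentGap (-ε)) ≤ expNegTangentGap t := by
  rcases le_abs'.1 ht with ht | ht
  · have hslope : 1 - exp ε ≤ 0 := sub_nonpos.2 (one_le_exp hε)
    have := expNegTangentGap_add_mul_le (-ε) t
    rw [neg_neg] at this
    nlinarith [min_le_right (expNegTangentGap ε) (expNegTangentGap (-ε))]
  · have hslope : 0 ≤ 1 - exp (-ε) := sub_nonneg.2 (exp_le_one_iff.2 (by linarith))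
    have := expNegTangentGap_add_mul_le ε t
    nlinarith [min_le_left (expNegTangentGap ε) (expNegTangentGap (-ε))]

lemma exp_neg_sub_exp_neg_add_mul (x m : ℝ) :
    exp (-x) - exp (-m) + exp (-m) * (x - m) = exp (-m) * expNegTangentGap (x - m) := by
  have : exp (-m) * exp (-(x - m)) = exp (-x) := by rw [← exp_add]; ring_nf
  unfold expNegTangentGap
  linear_combination -this

section Probability

variable {Ω : Type*} [MeasurableSpace Ω] {μ : Measure Ω} {f : Ω → ℝ}

lemma tendsto_measureReal_zero_iff [IsFiniteMeasure μ] {ι : Type*} {l : Filter ι}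
    {s : ι → Set Ω} :
    Tendsto (fun i => μ.real (s i)) l (nhds 0) ↔ Tendsto (fun i => μ (s i)) l (nhds 0) :=
  ENNReal.tendsto_toReal_zero_iff fun _ => measure_ne_top _ _

lemma integrable_exp_neg_of_nonneg [IsFiniteMeasure μ] (hf : AEStronglyMeasurable f μ)
    (hf0 : 0 ≤ᵐ[μ] f) :
    Integrable (fun ω => exp (-f ω)) μ := by
  refine (integrable_const 1).mono' (continuous_exp.comp_aestronglyMeasurable hf.neg) ?_
  filter_upwards [hf0] with ω hω
  rw [norm_of_nonneg (exp_pos _).le, exp_le_one_iff, neg_nonpos]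
  exact hω

variable [IsProbabilityMeasure μ]

lemma integral_le_add_measureReal_lt (hf : Integrable f μ) (hf1 : ∀ᵐ ω ∂μ, f ω ≤ 1)
    {δ : ℝ} (hδ : 0 ≤ δ) : ∫ ω, f ω ∂μ ≤ δ + μ.real {ω | δ < f ω} := by
  set S := {ω | δ < f ω}
  have hS : NullMeasurableSet S μ := nullMeasurableSet_lt aemeasurable_const hf.aemeasurable
  have hbound : ∀ᵐ ω ∂μ, f ω ≤ δ + S.indicator (fun _ => (1 : ℝ)) ω := by
    filter_upwards [hf1] with ω hω
    by_cases hωS : ω ∈ S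
    · rw [Set.indicator_of_mem hωS]
      linarith
    · rw [Set.indicator_of_notMem hωS, add_zero]
      exact le_of_not_gt hωS
  have hind : Integrable (S.indicator fun _ => (1 : ℝ)) μ := (integrable_const 1).indicator₀ hS
  calc ∫ ω, f ω ∂μ ≤ ∫ ω, (δ + S.indicator (fun _ => (1 : ℝ)) ω) ∂μ :=
        integral_mono_ae hf ((integrable_const δ).add hind) hbound
    _ = δ + μ.real S := by
        rw [integral_add (integrable_const δ) hind,
          integral_indicator₀ hS, setIntegral_const]
        simp

lemma abs_integral_exp_neg_sub_le (hf : Integrable f μ) (hf0 : 0 ≤ᵐ[μ] f) {δ : ℝ}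
    (hδ : 0 ≤ δ) :
    |∫ ω, exp (-f ω) ∂μ - exp (-∫ ω, f ω ∂μ)|
      ≤ δ + μ.real {ω | δ < |f ω - ∫ ω', f ω' ∂μ|} := by
  set m := ∫ ω, f ω ∂μ
  have hm : 0 ≤ m := integral_nonneg_of_ae hf0
  have hdiff : Integrable (fun ω => exp (-f ω) - exp (-m)) μ :=
    (integrable_exp_neg_of_nonneg hf.1 hf0).sub (integrable_const _)
  have hdiff_le_one : ∀ᵐ ω ∂μ, |exp (-f ω) - exp (-m)| ≤ 1 := by
    filter_upwards [hf0] with ω hω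
    exact abs_sub_le_of_nonneg_of_le (exp_pos _).le (exp_le_one_iff.2 (by simpa using hω))
      (exp_pos _).le (exp_le_one_iff.2 (by linarith))
  have hlevel : {ω | δ < |exp (-f ω) - exp (-m)|} ≤ᵐ[μ] {ω | δ < |f ω - m|} := by
    filter_upwards [hf0] with ω hω hδω
    exact hδω.trans_le (abs_exp_neg_sub_exp_neg_le hω hm)
  calc |∫ ω, exp (-f ω) ∂μ - exp (-m)| = |∫ ω, (exp (-f ω) - exp (-m)) ∂μ| := by
        rw [integral_sub (integrable_exp_neg_of_nonneg hf.1 hf0) (integrable_const _)]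
        simp
    _ ≤ ∫ ω, |exp (-f ω) - exp (-m)| ∂μ := abs_integral_le_integral_abs
    _ ≤ δ + μ.real {ω | δ < |exp (-f ω) - exp (-m)|} :=
        integral_le_add_measureReal_lt hdiff.abs hdiff_le_one hδ
    _ ≤ δ + μ.real {ω | δ < |f ω - m|} := by
        gcongr δ + ?_
        exact ENNReal.toReal_mono (measure_ne_top _ _) (measure_mono_ae hlevel)

lemma integral_exp_neg_mul_expNegTangentGap (hf : Integrable f μ)
    (hexp : Integrable (fun ω => exp (-f ω)) μ) :
    ∫ ω, exp (-∫ ω', f ω' ∂μ) * expNegTangentGap (f ω - ∫ ω', f ω' ∂μ) ∂μ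
      = ∫ ω, exp (-f ω) ∂μ - exp (-∫ ω, f ω ∂μ) := by
  simp_rw [← exp_neg_sub_exp_neg_add_mul]
  rw [integral_add, integral_sub, integral_const_mul, integral_sub]
  all_goals first | simp | fun_prop

lemma mul_measureReal_lt_abs_sub_integral_le (hf : Integrable f μ) (hf0 : 0 ≤ᵐ[μ] f) {C : ℝ}
    (hC : ∫ ω, f ω ∂μ ≤ C) {ε : ℝ} (hε : 0 ≤ ε) :
    exp (-C) * min (expNegTangentGap ε) (expNegTangentGap (-ε))
        * μ.real {ω | ε < |f ω - ∫ ω', f ω' ∂μ|}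
      ≤ ∫ ω, exp (-f ω) ∂μ - exp (-∫ ω, f ω ∂μ) := by
  set m := ∫ ω, f ω ∂μ
  set c := exp (-C) * min (expNegTangentGap ε) (expNegTangentGap (-ε))
  set F := fun ω => exp (-m) * expNegTangentGap (f ω - m)
  have hexp := integrable_exp_neg_of_nonneg hf.1 hf0
  have hc : 0 ≤ c :=
    mul_nonneg (exp_pos _).le (le_min (expNegTangentGap_nonneg _) (expNegTangentGap_nonneg _))
  have hF0 : 0 ≤ᵐ[μ] F :=
    ae_of_all _ fun ω => mul_nonneg (exp_pos _).le (expNegTangentGap_nonneg _)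
  have hF : Integrable F μ := by
    simp_rw [F, ← exp_neg_sub_exp_neg_add_mul]
    exact (hexp.sub (integrable_const _)).add ((hf.sub (integrable_const _)).const_mul _)
  have hlevel : {ω | ε < |f ω - m|} ⊆ {ω | c ≤ F ω} := fun ω hω =>
    mul_le_mul (exp_le_exp.2 (neg_le_neg hC)) (min_expNegTangentGap_le hε (le_of_lt hω))
      (le_min (expNegTangentGap_nonneg _) (expNegTangentGap_nonneg _)) (exp_pos _).le
  calc c * μ.real {ω | ε < |f ω - m|} ≤ c * μ.real {ω | c ≤ F ω} :=
        mul_le_mul_of_nonneg_left (measureReal_mono hlevel) hc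
    _ ≤ ∫ ω, F ω ∂μ := mul_meas_ge_le_integral_of_nonneg hF0 hF c
    _ = ∫ ω, exp (-f ω) ∂μ - exp (-m) := integral_exp_neg_mul_expNegTangentGap hf hexp

end Probability

theorem stmt1 {Ω : Type*} [MeasurableSpace Ω] (μ : Measure Ω) [IsProbabilityMeasure μ]
    (Z : ℕ → Ω → ℝ) (hint : ∀ n, Integrable (Z n) μ)
    (hpos : ∀ n, 0 ≤ᵐ[μ] Z n) (C : ℝ) (hbd : ∀ n, ∫ ω, Z n ω ∂μ ≤ C) :
    (∀ ε > (0 : ℝ),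
        Tendsto (fun n => μ {ω | ε < |Z n ω - ∫ ω', Z n ω' ∂μ|}) atTop (nhds 0)) ↔
      Tendsto (fun n => (∫ ω, Real.exp (-(Z n ω)) ∂μ) - Real.exp (-(∫ ω, Z n ω ∂μ)))
        atTop (nhds 0) := by
  constructor
  · intro h
    refine NormedAddGroup.tendsto_nhds_zero.2 fun ε hε => ?_
    have hsmall :
        ∀ᶠ n in atTop, μ.real {ω | ε / 2 < |Z n ω - ∫ ω', Z n ω' ∂μ|} < ε / 2 :=
      (tendsto_measureReal_zero_iff.2 (h (ε / 2) (by positivity))).eventually_lt_const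
        (by positivity)
    filter_upwards [hsmall] with n hn
    rw [Real.norm_eq_abs]
    linarith [abs_integral_exp_neg_sub_le (hint n) (hpos n) (by positivity : 0 ≤ ε / 2)]
  · intro h ε hε
    set c := exp (-C) * min (expNegTangentGap ε) (expNegTangentGap (-ε))
    have hc : 0 < c := mul_pos (exp_pos _)
      (lt_min (expNegTangentGap_pos hε.ne') (expNegTangentGap_pos (neg_ne_zero.2 hε.ne')))
    refine tendsto_measureReal_zero_iff.1
      (squeeze_zero (fun _ => measureReal_nonneg) (fun n => ?_) (by simpa using h.div_const c))
    exact (le_div_iff₀' hc).2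
      (mul_measureReal_lt_abs_sub_integral_le (hint n) (hpos n) (hbd n) hε.le)
end

section
/- Let Zₙ be nonnegative random variables with E[Zₙ] bounded, and Yₙ random elements. Then the identity E[Zₙ/(1+Zₙ)] - E[E(Zₙ|Yₙ)/(1 + E(Zₙ|Yₙ))] = -E[(Zₙ - E(Zₙ|Yₙ))²/((1+Zₙ)(1+E(Zₙ|Yₙ))²)] holds. -/
open MeasureTheory

/-!
With `W = μ[Z | m]` and the bounded `m`-measurable weight `f = (1 + W)⁻²`, the identity
`z / (1 + z) - w / (1 + w) = f (z - w) - (z - w)² / ((1 + z) (1 + w)²)` reduces the claim to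
`∫ f (Z - W) = 0`, which is the pull-out property of conditional expectation.
-/

theorem div_one_add_sub_div_one_add {K : Type*} [Field K] {z w : K} (hz : 1 + z ≠ 0)
    (hw : 1 + w ≠ 0) :
    z / (1 + z) - w / (1 + w) =
      ((1 + w) ^ 2)⁻¹ * (z - w) - (z - w) ^ 2 / ((1 + z) * (1 + w) ^ 2) := by
  field_simp
  ring

theorem abs_div_one_add_le_one {x : ℝ} (hx : 0 ≤ x) : |x / (1 + x)| ≤ 1 := by
  rw [abs_of_nonneg (by positivity), div_le_one (by positivity)]
  linarith

theorem abs_inv_one_add_sq_le_one {x : ℝ} (hx : 0 ≤ x) : |((1 + x) ^ 2)⁻¹| ≤ 1 := by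
  rw [abs_of_pos (by positivity)]
  exact inv_le_one_of_one_le₀ (one_le_pow₀ (by linarith))

section

variable {Ω : Type*} {m m₀ : MeasurableSpace Ω} {μ : Measure Ω}

theorem integral_mul_condExp_of_bound [IsFiniteMeasure μ] (hm : m ≤ m₀) {f g : Ω → ℝ}
    (hf : StronglyMeasurable[m] f) (hg : Integrable g μ) (c : ℝ)
    (hf_bound : ∀ᵐ ω ∂μ, ‖f ω‖ ≤ c) :
    ∫ ω, f ω * (μ[g | m]) ω ∂μ = ∫ ω, f ω * g ω ∂μ :=
  calc ∫ ω, f ω * (μ[g | m]) ω ∂μ = ∫ ω, (μ[f * g | m]) ω ∂μ :=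
        integral_congr_ae (condExp_stronglyMeasurable_mul_of_bound hm hf hg c hf_bound).symm
    _ = ∫ ω, f ω * g ω ∂μ := integral_condExp hm

theorem integrable_div_one_add_of_nonneg [IsFiniteMeasure μ] {f : Ω → ℝ}
    (hf : AEMeasurable f μ) (hf_nonneg : 0 ≤ᵐ[μ] f) :
    Integrable (fun ω => f ω / (1 + f ω)) μ :=
  Integrable.of_bound (hf.div (aemeasurable_const.add hf)).aestronglyMeasurable 1 <| by
    filter_upwards [hf_nonneg] with ω hω using abs_div_one_add_le_one hω

theorem integral_div_one_add_sub_condExp [IsFiniteMeasure μ] (hm : m ≤ m₀) {Z : Ω → ℝ}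
    (hZ : Integrable Z μ) (hZ_nonneg : 0 ≤ᵐ[μ] Z) :
    (∫ ω, Z ω / (1 + Z ω) ∂μ) - (∫ ω, (μ[Z | m]) ω / (1 + (μ[Z | m]) ω) ∂μ) =
      -∫ ω, (Z ω - (μ[Z | m]) ω) ^ 2 / ((1 + Z ω) * (1 + (μ[Z | m]) ω) ^ 2) ∂μ := by
  set W := μ[Z | m]
  have hW_nonneg : 0 ≤ᵐ[μ] W := condExp_nonneg hZ_nonneg
  have hW : Integrable W μ := integrable_condExp
  set f : Ω → ℝ := fun ω => ((1 + W ω) ^ 2)⁻¹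
  have hf : StronglyMeasurable[m] f :=
    ((measurable_const.add stronglyMeasurable_condExp.measurable).pow_const 2).inv
      |>.stronglyMeasurable
  have hf_bound : ∀ᵐ ω ∂μ, ‖f ω‖ ≤ 1 := by
    filter_upwards [hW_nonneg] with ω hω using abs_inv_one_add_sq_le_one hω
  have hfZ : Integrable (fun ω => f ω * Z ω) μ :=
    hZ.bdd_mul (hf.mono hm).aestronglyMeasurable hf_bound
  have hfW : Integrable (fun ω => f ω * W ω) μ :=
    hW.bdd_mul (hf.mono hm).aestronglyMeasurable hf_bound
  have hA := integrable_div_one_add_of_nonneg hZ.aemeasurable hZ_nonneg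
  have hB := integrable_div_one_add_of_nonneg hW.aemeasurable hW_nonneg
  have hpointwise : (fun ω => (Z ω - W ω) ^ 2 / ((1 + Z ω) * (1 + W ω) ^ 2)) =ᵐ[μ]
      fun ω => (f ω * Z ω - f ω * W ω) - (Z ω / (1 + Z ω) - W ω / (1 + W ω)) := by
    filter_upwards [hZ_nonneg, hW_nonneg] with ω hz hw
    rw [div_one_add_sub_div_one_add (add_pos_of_pos_of_nonneg one_pos hz).ne'
      (add_pos_of_pos_of_nonneg one_pos hw).ne']
    ring
  have hfZW : Integrable (fun ω => f ω * Z ω - f ω * W ω) μ := hfZ.sub hfW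
  have hAB : Integrable (fun ω => Z ω / (1 + Z ω) - W ω / (1 + W ω)) μ := hA.sub hB
  rw [integral_congr_ae hpointwise, integral_sub hfZW hAB,
    integral_sub hfZ hfW, integral_sub hA hB, integral_mul_condExp_of_bound hm hf hZ 1 hf_bound]
  ring

end

theorem stmt2 {Ω β : Type*} [MeasurableSpace Ω] [MeasurableSpace β]
    (μ : Measure Ω) [IsProbabilityMeasure μ]
    (Z : Ω → ℝ) (Y : Ω → β) (hY : Measurable Y)
    (hZ : Integrable Z μ) (hpos : 0 ≤ᵐ[μ] Z)
    (W : Ω → ℝ) (hW : W = μ[Z | MeasurableSpace.comap Y inferInstance]) :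
    (∫ ω, Z ω / (1 + Z ω) ∂μ) - (∫ ω, W ω / (1 + W ω) ∂μ) =
      -∫ ω, (Z ω - W ω) ^ 2 / ((1 + Z ω) * (1 + W ω) ^ 2) ∂μ := by
  subst hW
  exact integral_div_one_add_sub_condExp hY.comap_le hZ hpos
end

section
/- Let Zₙ be nonnegative random variables with E[Zₙ] bounded uniformly in n, and Yₙ random elements. If E[Zₙ/(1+Zₙ)] - E[E(Zₙ|Yₙ)/(1+E(Zₙ|Yₙ))] → 0 as n → ∞, then Zₙ - E(Zₙ|Yₙ) → 0 in probability. -/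
/-!
The function φ(x) = x / (1 + x) is concave on [0, ∞) with φ'(w) = (1 + w)⁻², and its concavity
defect φ(w) + φ'(w) (z - w) - φ(z) equals (z - w)² / ((1 + w)² (1 + z)). Take z = Zₙ and
w = Wₙ = E(Zₙ | Yₙ): φ'(Wₙ) is bounded and σ(Yₙ)-measurable, so E[φ'(Wₙ) (Zₙ - Wₙ)] = 0 and the
expected defect is E φ(Wₙ) - E φ(Zₙ) → 0. By Markov the nonnegative defect tends to 0 in
probability. On {Zₙ ≤ M, Wₙ ≤ M} it dominates (Zₙ - Wₙ)² / (1 + M)³, and since E Wₙ = E Zₙ ≤ C,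
Markov makes {Zₙ > M} ∪ {Wₙ > M} uniformly small.
-/

open MeasureTheory Filter Topology

noncomputable def concavityDefect (z w : ℝ) : ℝ := (z - w) ^ 2 / ((1 + w) ^ 2 * (1 + z))

lemma concavityDefect_eq {z w : ℝ} (hz : 0 ≤ z) (hw : 0 ≤ w) :
    concavityDefect z w = w / (1 + w) + ((1 + w) ^ 2)⁻¹ * (z - w) - z / (1 + z) := by
  unfold concavityDefect
  have : (0 : ℝ) < 1 + z := by linarith
  have : (0 : ℝ) < 1 + w := by linarith
  field_simp
  ring

lemma concavityDefect_nonneg {z : ℝ} (hz : 0 ≤ z) (w : ℝ) : 0 ≤ concavityDefect z w := by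
  unfold concavityDefect
  positivity

lemma div_le_concavityDefect {z w M ε : ℝ} (hz : 0 ≤ z) (hw : 0 ≤ w) (hzM : z ≤ M) (hwM : w ≤ M)
    (hε : 0 ≤ ε) (hεzw : ε ≤ |z - w|) : ε ^ 2 / (1 + M) ^ 3 ≤ concavityDefect z w := by
  have hsq : ε ^ 2 ≤ (z - w) ^ 2 := by
    rw [← sq_abs (z - w)]
    gcongr
  have hden : (1 + w) ^ 2 * (1 + z) ≤ (1 + M) ^ 3 :=
    calc (1 + w) ^ 2 * (1 + z) ≤ (1 + M) ^ 2 * (1 + M) := by gcongr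
      _ = (1 + M) ^ 3 := by ring
  unfold concavityDefect
  exact div_le_div₀ (sq_nonneg _) hsq (by positivity) hden

section ConditionalExpectation

variable {Ω : Type*} {m m₀ : MeasurableSpace Ω} {μ : Measure Ω}

lemma integrable_div_one_add [IsFiniteMeasure μ] {f : Ω → ℝ} (hf : AEMeasurable f μ)
    (hf₀ : 0 ≤ᵐ[μ] f) : Integrable (fun ω => f ω / (1 + f ω)) μ := by
  refine (integrable_const 1).mono' (hf.div (aemeasurable_const.add hf)).aestronglyMeasurable ?_
  filter_upwards [hf₀] with ω (hω : 0 ≤ f ω)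
  rw [Real.norm_eq_abs, abs_of_nonneg (by positivity), div_le_one (by positivity)]
  linarith

lemma integral_mul_sub_condExp (hm : m ≤ m₀) [SigmaFinite (μ.trim hm)] {f g : Ω → ℝ} {c : ℝ}
    (hg : StronglyMeasurable[m] g) (hg_bdd : ∀ᵐ ω ∂μ, ‖g ω‖ ≤ c) (hf : Integrable f μ) :
    ∫ ω, g ω * (f ω - μ[f | m] ω) ∂μ = 0 := by
  have hgf : Integrable (fun ω => g ω * f ω) μ :=
    hf.bdd_mul (hg.mono hm).aestronglyMeasurable hg_bdd
  have hgcondExp : Integrable (fun ω => g ω * μ[f | m] ω) μ :=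
    integrable_condExp.bdd_mul (hg.mono hm).aestronglyMeasurable hg_bdd
  have pull_out : ∫ ω, g ω * μ[f | m] ω ∂μ = ∫ ω, g ω * f ω ∂μ :=
    calc ∫ ω, g ω * μ[f | m] ω ∂μ = ∫ ω, μ[g * f | m] ω ∂μ :=
          integral_congr_ae (condExp_mul_of_stronglyMeasurable_left hg hgf hf).symm
      _ = ∫ ω, g ω * f ω ∂μ := integral_condExp hm
  simp only [mul_sub]
  rw [integral_sub hgf hgcondExp, pull_out, sub_self]

lemma concavityDefect_condExp_ae_eq {f : Ω → ℝ} (hf₀ : 0 ≤ᵐ[μ] f) :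
    (fun ω => concavityDefect (f ω) (μ[f | m] ω)) =ᵐ[μ] fun ω =>
      μ[f | m] ω / (1 + μ[f | m] ω) + ((1 + μ[f | m] ω) ^ 2)⁻¹ * (f ω - μ[f | m] ω)
        - f ω / (1 + f ω) := by
  filter_upwards [hf₀, condExp_nonneg (m := m) hf₀] with ω hω hω'
  exact concavityDefect_eq hω hω'

lemma stronglyMeasurable_inv_one_add_condExp_sq {f : Ω → ℝ} :
    StronglyMeasurable[m] fun ω => ((1 + μ[f | m] ω) ^ 2)⁻¹ :=
  ((measurable_const.add stronglyMeasurable_condExp.measurable).pow_const 2).inv.stronglyMeasurable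

lemma ae_norm_inv_one_add_condExp_sq_le_one {f : Ω → ℝ} (hf₀ : 0 ≤ᵐ[μ] f) :
    ∀ᵐ ω ∂μ, ‖((1 + μ[f | m] ω) ^ 2)⁻¹‖ ≤ 1 := by
  filter_upwards [condExp_nonneg (m := m) hf₀] with ω (hω : 0 ≤ μ[f | m] ω)
  rw [Real.norm_eq_abs, abs_of_pos (by positivity)]
  exact inv_le_one_of_one_le₀ (one_le_pow₀ (by linarith))

variable (hm : m ≤ m₀) {f : Ω → ℝ} (hf : Integrable f μ) (hf₀ : 0 ≤ᵐ[μ] f)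
include hm hf hf₀

lemma integrable_inv_one_add_condExp_sq_mul_sub :
    Integrable (fun ω => ((1 + μ[f | m] ω) ^ 2)⁻¹ * (f ω - μ[f | m] ω)) μ :=
  (hf.sub integrable_condExp).bdd_mul
    (stronglyMeasurable_inv_one_add_condExp_sq.mono hm).aestronglyMeasurable
    (ae_norm_inv_one_add_condExp_sq_le_one hf₀)

variable [IsFiniteMeasure μ]

lemma integrable_div_one_add_condExp_add_mul_sub :
    Integrable (fun ω => μ[f | m] ω / (1 + μ[f | m] ω)
      + ((1 + μ[f | m] ω) ^ 2)⁻¹ * (f ω - μ[f | m] ω)) μ :=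
  (integrable_div_one_add integrable_condExp.aemeasurable (condExp_nonneg hf₀)).add
    (integrable_inv_one_add_condExp_sq_mul_sub hm hf hf₀)

lemma integrable_concavityDefect_condExp :
    Integrable (fun ω => concavityDefect (f ω) (μ[f | m] ω)) μ :=
  ((integrable_div_one_add_condExp_add_mul_sub hm hf hf₀).sub
    (integrable_div_one_add hf.aemeasurable hf₀)).congr (concavityDefect_condExp_ae_eq hf₀).symm

lemma integral_concavityDefect_condExp :
    ∫ ω, concavityDefect (f ω) (μ[f | m] ω) ∂μ
      = ∫ ω, μ[f | m] ω / (1 + μ[f | m] ω) ∂μ - ∫ ω, f ω / (1 + f ω) ∂μ := by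
  rw [integral_congr_ae (concavityDefect_condExp_ae_eq hf₀),
    integral_sub (integrable_div_one_add_condExp_add_mul_sub hm hf hf₀)
      (integrable_div_one_add hf.aemeasurable hf₀),
    integral_add (integrable_div_one_add integrable_condExp.aemeasurable (condExp_nonneg hf₀))
      (integrable_inv_one_add_condExp_sq_mul_sub hm hf hf₀),
    integral_mul_sub_condExp hm stronglyMeasurable_inv_one_add_condExp_sq
      (ae_norm_inv_one_add_condExp_sq_le_one hf₀) hf, add_zero]

end ConditionalExpectation

section ConvergenceInProbability

variable {Ω : Type*} [MeasurableSpace Ω] {μ : Measure Ω}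

lemma measureReal_lt_le_div_of_integral_le [IsFiniteMeasure μ] {f : Ω → ℝ} (hf : Integrable f μ)
    (hf₀ : 0 ≤ᵐ[μ] f) {C M : ℝ} (hfC : ∫ ω, f ω ∂μ ≤ C) (hM : 0 < M) :
    μ.real {ω | M < f ω} ≤ C / M := by
  rw [le_div_iff₀' hM]
  calc M * μ.real {ω | M < f ω} ≤ M * μ.real {ω | M ≤ f ω} := by
        gcongr 1
        exact measureReal_mono fun ω (hω : M < f ω) => hω.le
    _ ≤ ∫ ω, f ω ∂μ := mul_meas_ge_le_integral_of_nonneg hf₀ hf M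
    _ ≤ C := hfC

lemma tendsto_measureReal_le_of_tendsto_integral {ι : Type*} {l : Filter ι} {f : ι → Ω → ℝ}
    (hf : ∀ i, Integrable (f i) μ) (hf₀ : ∀ i, 0 ≤ᵐ[μ] f i)
    (hf_lim : Tendsto (fun i => ∫ ω, f i ω ∂μ) l (𝓝 0)) {c : ℝ} (hc : 0 < c) :
    Tendsto (fun i => μ.real {ω | c ≤ f i ω}) l (𝓝 0) := by
  refine squeeze_zero (fun _ => measureReal_nonneg)
    (fun i => (le_div_iff₀' hc).2 (mul_meas_ge_le_integral_of_nonneg (hf₀ i) (hf i) c)) ?_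
  simpa using hf_lim.div_const c

lemma measureReal_lt_abs_sub_le [IsFiniteMeasure μ] {X V : Ω → ℝ} (hX : Integrable X μ)
    (hV : Integrable V μ) (hX₀ : 0 ≤ᵐ[μ] X) (hV₀ : 0 ≤ᵐ[μ] V) {C M ε : ℝ}
    (hXC : ∫ ω, X ω ∂μ ≤ C) (hVC : ∫ ω, V ω ∂μ ≤ C) (hM : 0 < M) (hε : 0 ≤ ε) :
    μ.real {ω | ε < |X ω - V ω|}
      ≤ C / M + C / M + μ.real {ω | ε ^ 2 / (1 + M) ^ 3 ≤ concavityDefect (X ω) (V ω)} := by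
  have hcover : ({ω | ε < |X ω - V ω|} : Set Ω) ≤ᵐ[μ] ({ω | M < X ω} ∪ {ω | M < V ω}
      ∪ {ω | ε ^ 2 / (1 + M) ^ 3 ≤ concavityDefect (X ω) (V ω)} : Set Ω) := by
    filter_upwards [hX₀, hV₀] with ω (hXω : 0 ≤ X ω) (hVω : 0 ≤ V ω) (hω : ε < |X ω - V ω|)
    by_cases hXM : M < X ω
    · exact Or.inl (Or.inl hXM)
    by_cases hVM : M < V ω
    · exact Or.inl (Or.inr hVM)
    exact Or.inr <| div_le_concavityDefect hXω hVω (not_lt.1 hXM) (not_lt.1 hVM) hε hω.le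
  calc μ.real {ω | ε < |X ω - V ω|}
      ≤ μ.real ({ω | M < X ω} ∪ {ω | M < V ω}
        ∪ {ω | ε ^ 2 / (1 + M) ^ 3 ≤ concavityDefect (X ω) (V ω)}) :=
        ENNReal.toReal_mono (by finiteness) (measure_mono_ae hcover)
    _ ≤ μ.real {ω | M < X ω} + μ.real {ω | M < V ω}
        + μ.real {ω | ε ^ 2 / (1 + M) ^ 3 ≤ concavityDefect (X ω) (V ω)} :=
        (measureReal_union_le _ _).trans (add_le_add_left (measureReal_union_le _ _) _)
    _ ≤ _ := by
        gcongr
        · exact measureReal_lt_le_div_of_integral_le hX hX₀ hXC hM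
        · exact measureReal_lt_le_div_of_integral_le hV hV₀ hVC hM

theorem tendsto_measure_lt_abs_sub_of_tendsto_integral_concavityDefect [IsFiniteMeasure μ]
    {ι : Type*} {l : Filter ι} {X V : ι → Ω → ℝ} (hX : ∀ i, Integrable (X i) μ)
    (hV : ∀ i, Integrable (V i) μ) (hX₀ : ∀ i, 0 ≤ᵐ[μ] X i) (hV₀ : ∀ i, 0 ≤ᵐ[μ] V i) {C : ℝ}
    (hXC : ∀ i, ∫ ω, X i ω ∂μ ≤ C) (hVC : ∀ i, ∫ ω, V i ω ∂μ ≤ C)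
    (hD : ∀ i, Integrable (fun ω => concavityDefect (X i ω) (V i ω)) μ)
    (hD_lim : Tendsto (fun i => ∫ ω, concavityDefect (X i ω) (V i ω) ∂μ) l (𝓝 0))
    {ε : ℝ} (hε : 0 < ε) :
    Tendsto (fun i => μ {ω | ε < |X i ω - V i ω|}) l (𝓝 0) := by
  have hD₀ (i : ι) : 0 ≤ᵐ[μ] fun ω => concavityDefect (X i ω) (V i ω) := by
    filter_upwards [hX₀ i] with ω hω using concavityDefect_nonneg hω _
  rw [← ENNReal.tendsto_toReal_iff (fun _ => measure_ne_top μ _) ENNReal.zero_ne_top,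
    ENNReal.toReal_zero]
  refine tendsto_order.2 ⟨fun a ha => .of_forall fun i => ha.trans_le ENNReal.toReal_nonneg,
    fun δ hδ => ?_⟩
  obtain ⟨M, hM, hCM⟩ := ((eventually_gt_atTop 0).and
    ((tendsto_const_div_atTop_nhds_zero_nat C).eventually
      (gt_mem_nhds (by positivity : 0 < δ / 3)))).exists
  filter_upwards [(tendsto_measureReal_le_of_tendsto_integral hD hD₀ hD_lim
    (by positivity : 0 < ε ^ 2 / (1 + (M : ℝ)) ^ 3)).eventually
      (gt_mem_nhds (by positivity : 0 < δ / 3))] with i hi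
  refine (measureReal_lt_abs_sub_le (hX i) (hV i) (hX₀ i) (hV₀ i) (hXC i) (hVC i)
    (Nat.cast_pos.2 hM) hε.le).trans_lt ?_
  linarith

end ConvergenceInProbability

theorem stmt3 {Ω β : Type*} [MeasurableSpace Ω] [MeasurableSpace β]
    (μ : Measure Ω) [IsProbabilityMeasure μ]
    (Z : ℕ → Ω → ℝ) (Y : ℕ → Ω → β) (hY : ∀ n, Measurable (Y n))
    (hZ : ∀ n, Integrable (Z n) μ) (hpos : ∀ n, 0 ≤ᵐ[μ] Z n)
    (C : ℝ) (hbd : ∀ n, ∫ ω, Z n ω ∂μ ≤ C)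
    (W : ℕ → Ω → ℝ)
    (hW : ∀ n, W n = μ[Z n | MeasurableSpace.comap (Y n) inferInstance])
    (hconv : Tendsto
      (fun n => (∫ ω, Z n ω / (1 + Z n ω) ∂μ) - ∫ ω, W n ω / (1 + W n ω) ∂μ)
      atTop (nhds 0)) :
    ∀ ε > (0 : ℝ),
      Tendsto (fun n => μ {ω | ε < |Z n ω - W n ω|}) atTop (nhds 0) := by
  intro ε hε
  obtain rfl : W = fun n => μ[Z n | MeasurableSpace.comap (Y n) inferInstance] := funext hW
  have hm (n : ℕ) := (hY n).comap_le
  have hdefect : Tendsto (fun n => ∫ ω, concavityDefect (Z n ω)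
      (μ[Z n | MeasurableSpace.comap (Y n) inferInstance] ω) ∂μ) atTop (𝓝 0) := by
    simp_rw [integral_concavityDefect_condExp (hm _) (hZ _) (hpos _)]
    simpa using hconv.neg
  exact tendsto_measure_lt_abs_sub_of_tendsto_integral_concavityDefect hZ
    (fun _ => integrable_condExp) hpos (fun n => condExp_nonneg (hpos n)) hbd
    (fun n => (integral_condExp (hm n)).trans_le (hbd n))
    (fun n => integrable_concavityDefect_condExp (hm n) (hZ n) (hpos n)) hdefect hε
end

section
/- Let C be a real symmetric p×p matrix, w ∈ ℝᵖ, and z ∈ ℂ with Im(z) > 0. Then |wᵀ(C - zI)⁻² w| / |1 + wᵀ(C - zI)⁻¹ w| ≤ 1/Im(z). -/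
/-!
Put `v = (C - zI)⁻¹ w`. Since `C - zI` is complex symmetric, the numerator is `vᵀv`, of modulus
at most `v*v = ‖v‖²`. Since `w` is real, `wᵀv = ((C - zI)v)* v`, the conjugate of `v*(C - zI)v`,
whose imaginary part is `-Im z ‖v‖²` because `C` is Hermitian. Hence the denominator is at least
`Im(1 + wᵀv) = Im z ‖v‖²`. The same identity shows that `C - zI` has trivial kernel.
-/

open Matrix
open scoped ComplexOrder

namespace Matrix

lemma IsSymm.dotProduct_mul_self_mulVec {n R : Type*} [Fintype n] [CommSemiring R]
    {A : Matrix n n R} (hA : A.IsSymm) (w : n → R) :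
    w ⬝ᵥ (A * A) *ᵥ w = (A *ᵥ w) ⬝ᵥ (A *ᵥ w) := by
  rw [← mulVec_mulVec, dotProduct_mulVec, ← mulVec_transpose, hA.eq]

variable {n 𝕜 : Type*} [Fintype n] [RCLike 𝕜]

lemma im_star_dotProduct_self (v : n → 𝕜) : RCLike.im (star v ⬝ᵥ v) = 0 :=
  (RCLike.nonneg_iff.mp (dotProduct_star_self_nonneg v)).2

lemma norm_dotProduct_self_le (v : n → 𝕜) : ‖v ⬝ᵥ v‖ ≤ RCLike.re (star v ⬝ᵥ v) := by
  have hsq : ∀ i, RCLike.re (star (v i) * v i) = ‖v i‖ ^ 2 := fun i => by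
    rw [RCLike.star_def, RCLike.conj_mul, ← RCLike.ofReal_pow, RCLike.ofReal_re]
  calc ‖v ⬝ᵥ v‖ ≤ ∑ i, ‖v i * v i‖ := norm_sum_le _ _
    _ = RCLike.re (star v ⬝ᵥ v) := by
      simp only [dotProduct, Pi.star_apply, map_sum, hsq, norm_mul, sq]

variable [DecidableEq n] {H : Matrix n n 𝕜}

lemma IsHermitian.im_star_dotProduct_sub_smul_one_mulVec (hH : H.IsHermitian) (z : 𝕜)
    (v : n → 𝕜) :
    RCLike.im (star v ⬝ᵥ (H - z • 1) *ᵥ v) = -(RCLike.im z * RCLike.re (star v ⬝ᵥ v)) := by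
  rw [sub_mulVec, smul_mulVec, one_mulVec, dotProduct_sub, dotProduct_smul, smul_eq_mul,
    map_sub, hH.im_star_dotProduct_mulVec_self, RCLike.mul_im, im_star_dotProduct_self]
  ring

lemma IsHermitian.isUnit_det_sub_smul_one (hH : H.IsHermitian) {z : 𝕜}
    (hz : RCLike.im z ≠ 0) : IsUnit (H - z • 1).det := by
  rw [isUnit_iff_ne_zero]
  intro hdet
  obtain ⟨v, hv, hker⟩ := exists_mulVec_eq_zero_iff.mpr hdet
  have hpos : 0 < RCLike.re (star v ⬝ᵥ v) :=
    RCLike.pos_iff.mp (dotProduct_star_self_pos_iff.mpr hv) |>.1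
  have := hH.im_star_dotProduct_sub_smul_one_mulVec z v
  rw [hker, dotProduct_zero, map_zero, zero_eq_neg] at this
  exact mul_ne_zero hz hpos.ne' this

lemma IsHermitian.im_dotProduct_inv_sub_smul_one_mulVec (hH : H.IsHermitian) {z : 𝕜}
    (hz : RCLike.im z ≠ 0) {w : n → 𝕜} (hw : star w = w) :
    RCLike.im (w ⬝ᵥ (H - z • 1)⁻¹ *ᵥ w) =
      RCLike.im z * RCLike.re (star ((H - z • 1)⁻¹ *ᵥ w) ⬝ᵥ (H - z • 1)⁻¹ *ᵥ w) := by
  set v := (H - z • 1)⁻¹ *ᵥ w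
  have hwv : (H - z • 1) *ᵥ v = w := by
    rw [mulVec_mulVec, mul_nonsing_inv _ (hH.isUnit_det_sub_smul_one hz), one_mulVec]
  calc RCLike.im (w ⬝ᵥ v) = RCLike.im (star ((H - z • 1) *ᵥ v) ⬝ᵥ v) := by rw [hwv, hw]
    _ = -RCLike.im (star v ⬝ᵥ (H - z • 1) *ᵥ v) := by
      rw [star_dotProduct, RCLike.star_def, RCLike.conj_im]
    _ = _ := by rw [hH.im_star_dotProduct_sub_smul_one_mulVec, neg_neg]

end Matrix

theorem stmt10 (p : ℕ) (C : Matrix (Fin p) (Fin p) ℝ) (hC : C.IsSymm)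
    (z : ℂ) (hz : 0 < z.im) (w : Fin p → ℝ) :
    let wc : Fin p → ℂ := fun i => (w i : ℂ)
    let A : Matrix (Fin p) (Fin p) ℂ :=
      (C.map (fun r => (r : ℂ)) - z • (1 : Matrix (Fin p) (Fin p) ℂ))⁻¹
    ‖wc ⬝ᵥ (A * A).mulVec wc‖ / ‖1 + wc ⬝ᵥ A.mulVec wc‖ ≤
      1 / z.im := by
  intro wc A
  have hH : (C.map (fun r => (r : ℂ))).IsHermitian :=
    (isHermitian_iff_isSymm.mpr hC).map _ fun r => (Complex.conj_ofReal r).symm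
  have hA : A.IsSymm := ((hC.map _).sub (isSymm_one.smul z)).inv
  have hwc : star wc = wc := funext fun i => Complex.conj_ofReal (w i)
  set v := A *ᵥ wc
  have hnum : ‖wc ⬝ᵥ (A * A) *ᵥ wc‖ ≤ (star v ⬝ᵥ v).re := by
    rw [hA.dotProduct_mul_self_mulVec]
    exact norm_dotProduct_self_le v
  have hden : z.im * (star v ⬝ᵥ v).re ≤ ‖1 + wc ⬝ᵥ v‖ := by
    have him := hH.im_dotProduct_inv_sub_smul_one_mulVec hz.ne' hwc
    calc z.im * (star v ⬝ᵥ v).re = (1 + wc ⬝ᵥ v).im := by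
          simpa [Complex.add_im] using him.symm
      _ ≤ ‖1 + wc ⬝ᵥ v‖ := Complex.im_le_norm _
  refine div_le_of_le_mul₀ (norm_nonneg _) (by positivity) ?_
  rw [one_div_mul_eq_div, le_div_iff₀ hz]
  calc _ ≤ (star v ⬝ᵥ v).re * z.im := mul_le_mul_of_nonneg_right hnum hz.le
    _ ≤ _ := by rwa [mul_comm]
end
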